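/- arXiv:1911.04345 — 12 statements merged into one kernel-verified Lean document; each statement's English description precedes it below -/
import Mathlib

section
/- Let C be a symmetric monoidal closed category with internal hom [−,−], and let i : D ⥤ C be a fully faithful functor admitting a left adjoint L, with adjunction unit η (a reflective localization). Then the following four conditions are equivalent: (1) for every object c of C and every object d of D, the unit map η at [c, i d], i.e. [c, i d] ⟶ i L [c, i d], is an isomorphism; (2) for every object c of C and every object d of D, the map [η_c, i d] : [i L c, i d] ⟶ [c, i d] induced by the unit is an isomorphism; (3) for all objects c, c' of C, the map L(η_c ⊗ id_{c'}) : L(c ⊗ c') ⟶ L(i L c ⊗ c') is an isomorphism; (4) for all objects c, c' of C, the map L(η_c ⊗ η_{c'}) : L(c ⊗ c') ⟶ L(i L c ⊗ i L c') is an isomorphism. -/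
open CategoryTheory MonoidalCategory

/-- Day's reflection theorem (1-categorical version): for a reflective localization
`L ⊣ i` (with `i` fully faithful) of a symmetric monoidal closed category `C`, the four
conditions on the interaction of the localization with the monoidal closed structure
are equivalent. -/
theorem day_reflection_tfae {C : Type*} [Category C] [MonoidalCategory C]
    [SymmetricCategory C] [MonoidalClosed C]
    {D : Type*} [Category D] (i : D ⥤ C) [i.Full] [i.Faithful]
    (L : C ⥤ D) (adj : L ⊣ i) :
    List.TFAE
      [ ∀ (c : C) (d : D), IsIso (adj.unit.app ((ihom c).obj (i.obj d))),
        ∀ (c : C) (d : D), IsIso ((MonoidalClosed.pre (adj.unit.app c)).app (i.obj d)),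
        ∀ (c c' : C), IsIso (L.map (adj.unit.app c ⊗ₘ 𝟙 c')),
        ∀ (c c' : C), IsIso (L.map (adj.unit.app c ⊗ₘ adj.unit.app c')) ] := by
  -- Mathlib quantifies over the object of the reflective subcategory first in (1) and (2).
  simpa only [tensorHom_id, forall_comm (α := D)] using Monoidal.Reflective.isIso_tfae adj
end

section
/- Let C be a symmetric monoidal closed category and let i : D ⥤ C be a fully faithful functor with left adjoint L and adjunction unit η. Assume that for all objects c, c' of C the map L(η_c ⊗ id_{c'}) : L(c ⊗ c') ⟶ L(i L c ⊗ c') is an isomorphism. Then local equivalences are stable under tensoring: if f : c ⟶ c' is a morphism of C such that L f is an isomorphism, then for every object c'' of C the morphism L(f ⊗ id_{c''}) : L(c ⊗ c'') ⟶ L(c' ⊗ c'') is an isomorphism. -/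
open CategoryTheory MonoidalCategory

namespace CategoryTheory.Adjunction

variable {C D : Type*} [Category C] [MonoidalCategory C] [Category D]
  {L : C ⥤ D} {i : D ⥤ C} (adj : L ⊣ i)

theorem whiskerRight_unit_naturality {c c' : C} (f : c ⟶ c') (Z : C) :
    f ▷ Z ≫ adj.unit.app c' ▷ Z = adj.unit.app c ▷ Z ≫ i.map (L.map f) ▷ Z := by
  rw [← comp_whiskerRight, ← comp_whiskerRight, adj.unit_naturality f]

/-- Two-out-of-three applied to the image under `L` of the square
`whiskerRight_unit_naturality`, whose right edge `i (L f) ▷ Z` is an isomorphism. -/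
theorem isIso_map_whiskerRight {c c' : C} (f : c ⟶ c') [IsIso (L.map f)] (Z : C)
    [IsIso (L.map (adj.unit.app c ▷ Z))] [IsIso (L.map (adj.unit.app c' ▷ Z))] :
    IsIso (L.map (f ▷ Z)) := by
  have : IsIso (L.map (f ▷ Z) ≫ L.map (adj.unit.app c' ▷ Z)) := by
    rw [← L.map_comp, adj.whiskerRight_unit_naturality, L.map_comp]
    infer_instance
  exact IsIso.of_isIso_comp_right _ (L.map (adj.unit.app c' ▷ Z))

end CategoryTheory.Adjunction

theorem local_equivalence_tensor_stable_general {C : Type*} [Category C] [MonoidalCategory C]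
    {D : Type*} [Category D] (i : D ⥤ C)
    (L : C ⥤ D) (adj : L ⊣ i)
    (h : ∀ (c c' : C), IsIso (L.map (adj.unit.app c ⊗ₘ 𝟙 c')))
    {c c' : C} (f : c ⟶ c') (hf : IsIso (L.map f)) (c'' : C) :
    IsIso (L.map (f ⊗ₘ 𝟙 c'')) := by
  simp only [tensorHom_id] at h ⊢
  have := h c c''
  have := h c' c''
  exact adj.isIso_map_whiskerRight f c''

/-- If, for a reflective localization `L ⊣ i` of a symmetric monoidal closed category `C`,
the maps `L(η_c ⊗ id_{c'})` are all isomorphisms, then local equivalences are stable under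
tensoring: if `L f` is an isomorphism, so is `L (f ⊗ id)`. -/
theorem local_equivalence_tensor_stable {C : Type*} [Category C] [MonoidalCategory C]
    [SymmetricCategory C] [MonoidalClosed C]
    {D : Type*} [Category D] (i : D ⥤ C) [i.Full] [i.Faithful]
    (L : C ⥤ D) (adj : L ⊣ i)
    (h : ∀ (c c' : C), IsIso (L.map (adj.unit.app c ⊗ₘ 𝟙 c')))
    {c c' : C} (f : c ⟶ c') (hf : IsIso (L.map f)) (c'' : C) :
    IsIso (L.map (f ⊗ₘ 𝟙 c'')) :=
  local_equivalence_tensor_stable_general i L adj h f hf c''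
end

section
/- Let C be a small category, let D, E, F be cocomplete categories, and let f : C ⥤ D, g : C ⥤ E, h : C ⥤ F be functors. Let Lan_h f : F ⥤ D, Lan_h g : F ⥤ E and Lan_g f : E ⥤ D denote pointwise left Kan extensions of f along h, of g along h, and of f along g, with structure (unit) natural transformations f ⟶ h ⋙ Lan_h f, g ⟶ h ⋙ Lan_h g (with components τ_c : g(c) ⟶ (Lan_h g)(h c)) and f ⟶ g ⋙ Lan_g f. Suppose that for every object c of C and every object x of F, the map Hom_F(h c, x) ⟶ Hom_E(g c, (Lan_h g) x) sending φ to ((Lan_h g)(φ)) ∘ τ_c is a bijection. Then the canonical natural transformation Lan_h f ⟶ Lan_h g ⋙ Lan_g f, induced by the universal property of Lan_h f from the composite f ⟶ g ⋙ Lan_g f ⟶ (h ⋙ Lan_h g) ⋙ Lan_g f, is an isomorphism. -/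
/-!
For `x : F`, the comparison functor `(h ↓ x) ⥤ (g ↓ Lhg x)`, `(c, φ) ↦ (c, τ_c ≫ Lhg φ)`, is an
equivalence of categories by the bijectivity hypothesis. Hence the colimit over
`g ↓ Lhg x` computing `Lgf (Lhg x)` is also a colimit over `h ↓ x`, i.e. `Lhg ⋙ Lgf` is a pointwise
left Kan extension of `f` along `h`, and so it is canonically isomorphic to `Lhf`.
-/

open CategoryTheory CategoryTheory.Limits

namespace CategoryTheory

variable {C D E F : Type*} [Category* C] [Category* D] [Category* E] [Category* F]

section

variable {g : C ⥤ E} {h : C ⥤ F} {Lhg : F ⥤ E} (τ : g ⟶ h ⋙ Lhg) (x : F)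

lemma CostructuredArrow.full_map₂_of_injective
    (hτ : ∀ c, Function.Injective (fun φ : h.obj c ⟶ x => τ.app c ≫ Lhg.map φ)) :
    (CostructuredArrow.map₂ (F := 𝟭 C) τ (𝟙 (Lhg.obj x))).Full where
  map_surjective {p q} u := by
    have hw : τ.app p.left ≫ Lhg.map (h.map u.left ≫ q.hom) = τ.app p.left ≫ Lhg.map p.hom := by
      simpa using (τ.naturality_assoc u.left _).symm.trans (CostructuredArrow.w u)
    exact ⟨CostructuredArrow.homMk u.left (hτ p.left hw), rfl⟩

lemma CostructuredArrow.essSurj_map₂_of_surjective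
    (hτ : ∀ c, Function.Surjective (fun φ : h.obj c ⟶ x => τ.app c ≫ Lhg.map φ)) :
    (CostructuredArrow.map₂ (F := 𝟭 C) τ (𝟙 (Lhg.obj x))).EssSurj where
  mem_essImage q := by
    obtain ⟨φ, hφ⟩ := hτ q.left q.hom
    exact ⟨CostructuredArrow.mk φ,
      ⟨CostructuredArrow.isoMk (Iso.refl _) (by simpa using hφ.symm)⟩⟩

lemma CostructuredArrow.isEquivalence_map₂_of_bijective
    (hτ : ∀ c, Function.Bijective (fun φ : h.obj c ⟶ x => τ.app c ≫ Lhg.map φ)) :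
    (CostructuredArrow.map₂ (F := 𝟭 C) τ (𝟙 (Lhg.obj x))).IsEquivalence :=
  have := full_map₂_of_injective τ x fun c => (hτ c).1
  have := essSurj_map₂_of_surjective τ x fun c => (hτ c).2
  { }

end

namespace Functor.LeftExtension

variable {f : C ⥤ D} {g : C ⥤ E} {h : C ⥤ F} {Lhg : F ⥤ E} (τ : g ⟶ h ⋙ Lhg)
  {Lgf : E ⥤ D} (γ : f ⟶ g ⋙ Lgf)

noncomputable def isPointwiseLeftKanExtensionAtComp (x : F)
    [(CostructuredArrow.map₂ (F := 𝟭 C) τ (𝟙 (Lhg.obj x))).Final]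
    (hx : (mk Lgf γ).IsPointwiseLeftKanExtensionAt (Lhg.obj x)) :
    (mk (Lhg ⋙ Lgf) (γ ≫ whiskerRight τ Lgf ≫ (associator h Lhg Lgf).hom)
      ).IsPointwiseLeftKanExtensionAt x :=
  IsColimit.ofIsoColimit
    ((Final.isColimitWhiskerEquiv (CostructuredArrow.map₂ (F := 𝟭 C) τ (𝟙 (Lhg.obj x))) _).symm hx)
    (Cocone.ext (Iso.refl _) fun p => by
      simp only [coconeAt, mk, StructuredArrow.mk_hom_eq_self, Cocone.whisker_ι, whiskerLeft_app,
        CostructuredArrow.map₂_obj_hom, NatTrans.comp_app, associator_hom_app, Iso.refl_hom,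
        Category.comp_id, map_comp]
      -- `simp` cannot reassociate: the middle objects agree only after unfolding `map₂`.
      exact (Category.assoc _ _ _).symm)

end Functor.LeftExtension

end CategoryTheory

theorem lan_comp_isIso_general {C : Type*} [SmallCategory C]
    {D E F : Type*} [Category D] [Category E] [Category F]
    (f : C ⥤ D) (g : C ⥤ E) (h : C ⥤ F)
    (Lhf : F ⥤ D) (α : f ⟶ h ⋙ Lhf) [Lhf.IsLeftKanExtension α]
    (Lhg : F ⥤ E) (τ : g ⟶ h ⋙ Lhg)
    (Lgf : E ⥤ D) (γ : f ⟶ g ⋙ Lgf)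
    (_hLgf : (Functor.LeftExtension.mk Lgf γ).IsPointwiseLeftKanExtension)
    (hyp : ∀ (c : C) (x : F),
      Function.Bijective (fun φ : h.obj c ⟶ x => τ.app c ≫ Lhg.map φ)) :
    IsIso (Lhf.descOfIsLeftKanExtension α (Lhg ⋙ Lgf)
      (γ ≫ CategoryTheory.Functor.whiskerRight τ Lgf ≫ (Functor.associator h Lhg Lgf).hom)) := by
  have hpointwise : (Functor.LeftExtension.mk (Lhg ⋙ Lgf)
      (γ ≫ Functor.whiskerRight τ Lgf ≫ (Functor.associator h Lhg Lgf).hom)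
      ).IsPointwiseLeftKanExtension := fun x =>
    have := CostructuredArrow.isEquivalence_map₂_of_bijective τ x (hyp · x)
    Functor.LeftExtension.isPointwiseLeftKanExtensionAtComp τ γ x (_hLgf _)
  have := hpointwise.isLeftKanExtension
  exact (Functor.isLeftKanExtension_iff_isIso _ α _
    (Lhf.descOfIsLeftKanExtension_fac α _ _)).1 this

/-- Composition of pointwise left Kan extensions: if for all `c : C` and `x : F` the map
`Hom_F(h c, x) → Hom_E(g c, (Lan_h g) x)`, `φ ↦ τ_c ≫ (Lan_h g).map φ`, is a bijection,
then the canonical comparison `Lan_h f ⟶ Lan_h g ⋙ Lan_g f` is an isomorphism. -/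
theorem lan_comp_isIso {C : Type*} [SmallCategory C]
    {D E F : Type*} [Category D] [Category E] [Category F]
    [HasColimits D] [HasColimits E]
    (f : C ⥤ D) (g : C ⥤ E) (h : C ⥤ F)
    (Lhf : F ⥤ D) (α : f ⟶ h ⋙ Lhf) [Lhf.IsLeftKanExtension α]
    (_hLhf : (Functor.LeftExtension.mk Lhf α).IsPointwiseLeftKanExtension)
    (Lhg : F ⥤ E) (τ : g ⟶ h ⋙ Lhg) [Lhg.IsLeftKanExtension τ]
    (_hLhg : (Functor.LeftExtension.mk Lhg τ).IsPointwiseLeftKanExtension)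
    (Lgf : E ⥤ D) (γ : f ⟶ g ⋙ Lgf) [Lgf.IsLeftKanExtension γ]
    (_hLgf : (Functor.LeftExtension.mk Lgf γ).IsPointwiseLeftKanExtension)
    (hyp : ∀ (c : C) (x : F),
      Function.Bijective (fun φ : h.obj c ⟶ x => τ.app c ≫ Lhg.map φ)) :
    IsIso (Lhf.descOfIsLeftKanExtension α (Lhg ⋙ Lgf)
      (γ ≫ CategoryTheory.Functor.whiskerRight τ Lgf ≫ (Functor.associator h Lhg Lgf).hom)) :=
  lan_comp_isIso_general f g h Lhf α Lhg τ Lgf γ _hLgf hyp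
end

section
/- Let C be a category with a zero object, zero morphisms, and binary biproducts (a semiadditive category), and let P be an object of C. Let π : Over P ⥤ C denote the forgetful functor from the over-category. Then whiskering with π gives a bijection π* from the set of natural transformations 𝟭_C ⟶ 𝟭_C to the set of natural transformations π ⟶ π. Its inverse sends a natural transformation H : π ⟶ π to the natural transformation of 𝟭_C whose component at an object c of C is the component of H at the object of Over P given by the zero morphism 0 : c ⟶ P. -/
open CategoryTheory CategoryTheory.Limits

/-- Whiskering a natural endomorphism of the identity functor with the forgetful functor
`π : Over P ⥤ C` gives a natural collection of endomorphisms over `P`. -/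
def whiskerOverForget {C : Type u} [Category.{v} C] [HasZeroMorphisms C] (P : C)
    (α : 𝟭 C ⟶ 𝟭 C) : Over.forget P ⟶ Over.forget P where
  app X := α.app X.left
  naturality X Y f := α.naturality f.left

/-- The candidate inverse: restrict a natural collection of endomorphisms over `P` to the
objects of `Over P` given by zero morphisms. -/
def natColToNatEnd {C : Type u} [Category.{v} C] [HasZeroMorphisms C] (P : C)
    (H : Over.forget P ⟶ Over.forget P) : 𝟭 C ⟶ 𝟭 C where
  app c := H.app (Over.mk (0 : c ⟶ P))
  naturality c c' f := H.naturality (Over.homMk f (by simp) :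
    Over.mk (0 : c ⟶ P) ⟶ Over.mk (0 : c' ⟶ P))

/-!
Every `f : c ⟶ P` maps, in `Over P`, to `snd : c ⊞ P ⟶ P` through its graph `(𝟙, f)`, so the
component of `H` at `f` is `(𝟙, f) ≫ g` with `g := H_snd ≫ fst`. Naturality along
`inr : 𝟙 P ⟶ snd` shows that `g` kills the summand `P`, i.e. `g` factors through `fst`; since
`(𝟙, f) ≫ fst = 𝟙`, the component of `H` at `f` does not depend on `f`.
-/

namespace CategoryTheory.Over

variable {C : Type u} [Category.{v} C] {P : C} (H : Over.forget P ⟶ Over.forget P)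

/-- `H.app (Over.mk f)`, typed as an endomorphism of `c` rather than of
`(Over.forget P).obj (Over.mk f)`, so that it can be rewritten along morphisms of `C`. -/
def appMk {c : C} (f : c ⟶ P) : c ⟶ c := H.app (Over.mk f)

lemma comp_appMk {c d : C} (φ : c ⟶ d) {f : c ⟶ P} {g : d ⟶ P} (w : φ ≫ g = f) :
    φ ≫ appMk H g = appMk H f ≫ φ :=
  H.naturality (Over.homMk φ w : Over.mk f ⟶ Over.mk g)

section Biprod

variable [HasZeroMorphisms C] [HasBinaryBiproducts C]

lemma appMk_eq_lift_comp {c : C} (f : c ⟶ P) :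
    appMk H f = biprod.lift (𝟙 c) f ≫ appMk H (biprod.snd : c ⊞ P ⟶ P) ≫ biprod.fst := by
  rw [reassoc_of% comp_appMk H (biprod.lift (𝟙 c) f) (biprod.lift_snd _ _), biprod.lift_fst,
    Category.comp_id]

lemma inr_comp_appMk_snd_comp_fst (c : C) :
    biprod.inr ≫ appMk H (biprod.snd : c ⊞ P ⟶ P) ≫ biprod.fst = 0 := by
  rw [reassoc_of% comp_appMk H biprod.inr biprod.inr_snd, biprod.inr_fst, comp_zero]

lemma appMk_snd_comp_fst (c : C) :
    appMk H (biprod.snd : c ⊞ P ⟶ P) ≫ biprod.fst =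
      biprod.fst ≫ biprod.inl ≫ appMk H (biprod.snd : c ⊞ P ⟶ P) ≫ biprod.fst := by
  apply biprod.hom_ext' <;> simp [inr_comp_appMk_snd_comp_fst]

theorem appMk_eq_appMk {c : C} (f f' : c ⟶ P) : appMk H f = appMk H f' := by
  rw [appMk_eq_lift_comp H f, appMk_eq_lift_comp H f', appMk_snd_comp_fst,
    biprod.lift_fst_assoc, biprod.lift_fst_assoc]

end Biprod

end CategoryTheory.Over

theorem whiskerOverForget_bijective_general {C : Type u} [Category.{v} C]
    [HasZeroMorphisms C] [HasBinaryBiproducts C] (P : C) :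
    Function.LeftInverse (natColToNatEnd P) (whiskerOverForget P) ∧
    Function.RightInverse (natColToNatEnd P) (whiskerOverForget P) :=
  ⟨fun _ => rfl, fun H => by ext X; exact Over.appMk_eq_appMk H 0 X.hom⟩

/-- For a semiadditive category `C` (zero morphisms and binary biproducts) and an object
`P`, whiskering with the forgetful functor `Over P ⥤ C` is a bijection from natural
endomorphisms of the identity functor to natural collections of endomorphisms over `P`,
with inverse given by restriction to zero morphisms. -/
theorem whiskerOverForget_bijective {C : Type u} [Category.{v} C] [HasZeroObject C]
    [HasZeroMorphisms C] [HasBinaryBiproducts C] (P : C) :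
    Function.LeftInverse (natColToNatEnd P) (whiskerOverForget P) ∧
    Function.RightInverse (natColToNatEnd P) (whiskerOverForget P) :=
  whiskerOverForget_bijective_general P
end

section
/- For every natural transformation α : 𝟭 ⟶ 𝟭 of the identity functor on the category of abelian groups, there exists a unique integer n such that for every abelian group A and every a ∈ A, the component α_A satisfies α_A(a) = n • a. In other words, evaluation at the group ℤ (sending α to α_ℤ(1) ∈ ℤ) is a bijection from the set of natural endomorphisms of the identity functor of abelian groups to ℤ. -/
/-!
`ℤ` is free on `1`, so naturality of `α` along the homomorphism `ℤ → A`, `1 ↦ a`, gives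
`α_A(a) = α_ℤ(1) • a`. Conversely, `n • 𝟙`, taken in the preadditive functor category,
is a natural endomorphism of the identity whose value at `1 : ℤ` is `n`.
-/

open CategoryTheory

theorem natEnd_app_eq_zsmul (α : 𝟭 AddCommGrpCat.{0} ⟶ 𝟭 AddCommGrpCat.{0}) {n : ℤ}
    (hn : α.app (AddCommGrpCat.of ℤ) (1 : ℤ) = n) (A : AddCommGrpCat.{0}) (a : A) :
    α.app A a = n • a := by
  have square := ConcreteCategory.congr_hom
    (α.naturality (show AddCommGrpCat.of ℤ ⟶ A from AddCommGrpCat.ofHom (zmultiplesHom A a)))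
    (1 : ℤ)
  simpa [hn] using square

theorem natEnd_ext {α β : 𝟭 AddCommGrpCat.{0} ⟶ 𝟭 AddCommGrpCat.{0}}
    (h : α.app (AddCommGrpCat.of ℤ) (1 : ℤ) = β.app (AddCommGrpCat.of ℤ) (1 : ℤ)) : α = β := by
  ext A a
  exact (natEnd_app_eq_zsmul α h A a).trans (natEnd_app_eq_zsmul β rfl A a).symm

/-- Every natural endomorphism of the identity functor of the category of abelian groups
is multiplication by a unique integer `n`; equivalently, evaluation at `ℤ` (sending `α` to
`α_ℤ(1)`) is a bijection from natural endomorphisms of the identity to `ℤ`. -/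
theorem natEnd_AddCommGrp_int :
    (∀ α : 𝟭 AddCommGrpCat.{0} ⟶ 𝟭 AddCommGrpCat.{0},
      ∃! n : ℤ, ∀ (A : AddCommGrpCat.{0}) (a : A), α.app A a = n • a) ∧
    Function.Bijective (fun α : 𝟭 AddCommGrpCat.{0} ⟶ 𝟭 AddCommGrpCat.{0} =>
      α.app (AddCommGrpCat.of ℤ) (1 : ℤ)) := by
  refine ⟨fun α => ⟨_, natEnd_app_eq_zsmul α rfl, fun n hn => ?_⟩,
    fun α β h => natEnd_ext h, fun (n : ℤ) => ⟨n • 𝟙 (𝟭 AddCommGrpCat.{0}), by simp⟩⟩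
  simpa using (hn (AddCommGrpCat.of ℤ) (1 : ℤ)).symm
end

section
/- Let P be an abelian group and let π : Over P ⥤ AddCommGrp be the forgetful functor from the over-category of the category of abelian groups over P. Then for every natural transformation H : π ⟶ π there exists a unique integer n such that for every object of Over P, i.e. every group homomorphism f : G → P, the component H_f : G → G is given by H_f(g) = n • g for all g ∈ G. -/
/-!
Let `A × A` lie over `P` via `q ∘ fst`. The first coordinate embedding and the diagonal are maps
over `P` from `(A, q)`, the second coordinate embedding is one from `(A, 0)`; since the component
of `H` at `A × A` is additive, naturality along these three maps gives `H_q = H_0`. At `(ℤ, 0)`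
the component is multiplication by `n := H_0 1`, and every `g` in an object `(G, f)` is the image
of `1` under the map `(ℤ, f ∘ (· • g)) ⟶ (G, f)`, so `H_f g = n • g`.
-/

open CategoryTheory

universe u

namespace CategoryTheory.Over

section

variable {P : AddCommGrpCat.{u}} (H : Over.forget P ⟶ Over.forget P)

lemma forget_endo_app_eq_app_zero {A : AddCommGrpCat.{u}} (q : A ⟶ P) (a : A) :
    H.app (Over.mk q) a = H.app (Over.mk 0) a := by
  let B : Over P := Over.mk (AddCommGrpCat.ofHom (q.hom.comp (AddMonoidHom.fst A A)))
  let inl : Over.mk q ⟶ B :=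
    Over.homMk (AddCommGrpCat.ofHom (AddMonoidHom.inl A A)) (by ext; rfl)
  let inr : Over.mk (0 : A ⟶ P) ⟶ B :=
    Over.homMk (AddCommGrpCat.ofHom (AddMonoidHom.inr A A)) (by ext; simp [B])
  let diag : Over.mk q ⟶ B :=
    Over.homMk (AddCommGrpCat.ofHom ((AddMonoidHom.id A).prod (AddMonoidHom.id A))) (by ext; rfl)
  let φ : A × A →+ A × A := (H.app B).hom
  have hinl : φ (a, 0) = (H.app (Over.mk q) a, 0) := NatTrans.naturality_apply H inl a
  have hinr : φ (0, a) = (0, H.app (Over.mk 0) a) := NatTrans.naturality_apply H inr a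
  have hdiag : φ (a, a) = (H.app (Over.mk q) a, H.app (Over.mk q) a) :=
    NatTrans.naturality_apply H diag a
  have hadd : φ (a, a) = φ (a, 0) + φ (0, a) := by
    rw [← map_add, Prod.mk_add_mk, add_zero, zero_add]
  rw [hinl, hinr, hdiag] at hadd
  simpa using congrArg (·.2) hadd

end

variable {P : AddCommGrpCat.{0}} (H : Over.forget P ⟶ Over.forget P)

def forgetEndoCoeff : ℤ := H.app (Over.mk (0 : AddCommGrpCat.of ℤ ⟶ P)) (1 : ℤ)

lemma forget_endo_app_eq_zsmul {G : AddCommGrpCat.{0}} (f : G ⟶ P) (g : G) :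
    H.app (Over.mk f) g = forgetEndoCoeff H • g := by
  let z : AddCommGrpCat.of ℤ ⟶ G := AddCommGrpCat.ofHom (zmultiplesHom G g)
  have hnat := NatTrans.naturality_apply H (Over.homMk z rfl : Over.mk (z ≫ f) ⟶ Over.mk f) (1 : ℤ)
  rw [forget_endo_app_eq_app_zero] at hnat
  change H.app (Over.mk f) ((1 : ℤ) • g) = forgetEndoCoeff H • g at hnat
  rwa [one_zsmul] at hnat

end CategoryTheory.Over

/-- Every natural collection of endomorphisms over an abelian group `P` (natural
transformation of the forgetful functor `Over P ⥤ AddCommGrp`) is given on each object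
`f : G ⟶ P` of `Over P` by multiplication by a unique integer `n`. -/
theorem natCol_over_AddCommGrp_int (P : AddCommGrpCat.{0})
    (H : Over.forget P ⟶ Over.forget P) :
    ∃! n : ℤ, ∀ (G : AddCommGrpCat.{0}) (f : G ⟶ P) (g : G),
      H.app (Over.mk f) g = n • g := by
  refine ⟨Over.forgetEndoCoeff H, fun G f g => Over.forget_endo_app_eq_zsmul H f g, ?_⟩
  intro n hn
  simpa [Over.forgetEndoCoeff] using (hn (AddCommGrpCat.of ℤ) 0 (1 : ℤ)).symm
end

section
/- Let P be an abelian group, let f : G → P be a group homomorphism which is non-torsion, meaning that for every integer n > 0 the homomorphism g ↦ f(n • g) is not the zero homomorphism. Let π : Over P ⥤ AddCommGrp be the forgetful functor and let H : π ⟶ π be a natural transformation such that f ∘ H_f = 0, where H_f : G → G is the component of H at the object f of Over P. Then H_f = 0. -/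
/-!
The point `p` of `P` is classified by the object `n ↦ n • p` of `Over P` with domain `ℤ`, and a
point `x` of any object `X` is the image of `1` under a map from the object classifying its image
`X.hom x`. By naturality `H` therefore acts on `x` by the integer `c (X.hom x)` by which it acts on
that `1`; evaluating on `(1, 1) = (1, 0) + (0, 1)` in the object `(a, b) ↦ a • p + b • q` shows
`c p = c (p + q) = c q`. So `H_f` is multiplication by a single integer `n`, and `f (n • g) = 0`
for all `g` forces `n = 0` when `f` is non-torsion.
-/

open CategoryTheory

theorem AddMonoidHom.eq_zero_of_forall_map_zsmul_eq_zero {G P : Type*} [AddCommGroup G]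
    [AddGroup P] (f : G →+ P) (hf : ∀ n : ℤ, 0 < n → ∃ g : G, f (n • g) ≠ 0) {n : ℤ}
    (hn : ∀ g : G, f (n • g) = 0) : n = 0 := by
  by_contra hne
  rcases lt_or_gt_of_ne hne with hneg | hpos
  · obtain ⟨g, hg⟩ := hf (-n) (neg_pos.mpr hneg)
    exact hg (by rw [neg_smul, map_neg, hn, neg_zero])
  · obtain ⟨g, hg⟩ := hf n hpos
    exact hg (hn g)

namespace AddCommGrpCat

def overInt {P : AddCommGrpCat.{0}} (p : P) : Over P :=
  Over.mk (ofHom (zmultiplesHom P p))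

section NatEndOverForget

variable {P : AddCommGrpCat.{0}} (H : Over.forget P ⟶ Over.forget P)

def natScalar (p : P) : ℤ :=
  H.app (overInt p) (1 : ℤ)

theorem app_apply_eq_natScalar_smul (X : Over P) (x : X.left) :
    H.app X x = natScalar H (X.hom x) • x := by
  let u : overInt (X.hom x) ⟶ X :=
    Over.homMk (ofHom (zmultiplesHom X.left x)) (int_hom_ext _ _ (by simp [overInt]))
  have hnat : H.app X ((1 : ℤ) • x) = natScalar H (X.hom x) • x := H.naturality_apply u (1 : ℤ)
  rwa [one_zsmul] at hnat

theorem natScalar_eq (p q : P) : natScalar H p = natScalar H q := by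
  let X : Over P := Over.mk (ofHom ((zmultiplesHom P p).coprod (zmultiplesHom P q)))
  let e₁ : X.left := ((1, 0) : ℤ × ℤ)
  let e₂ : X.left := ((0, 1) : ℤ × ℤ)
  have hdiag := app_apply_eq_natScalar_smul H X (e₁ + e₂)
  have hadd : H.app X (e₁ + e₂) = H.app X e₁ + H.app X e₂ := map_add _ _ _
  have h₁ : X.hom e₁ = p := by simp [X, e₁]
  have h₂ : X.hom e₂ = q := by simp [X, e₂]
  rw [hadd, map_add, app_apply_eq_natScalar_smul H X e₁, app_apply_eq_natScalar_smul H X e₂,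
    h₁, h₂] at hdiag
  change natScalar H p • ((1, 0) : ℤ × ℤ) + natScalar H q • ((0, 1) : ℤ × ℤ) =
    natScalar H (p + q) • ((1, 1) : ℤ × ℤ) at hdiag
  simp only [Prod.smul_mk, smul_eq_mul, mul_one, mul_zero, Prod.mk_add_mk, add_zero,
    zero_add, Prod.mk.injEq] at hdiag
  rw [hdiag.1, hdiag.2]

theorem app_apply_eq_smul (X : Over P) (x : X.left) : H.app X x = natScalar H (0 : P) • x := by
  rw [app_apply_eq_natScalar_smul, natScalar_eq H _ 0]

end NatEndOverForget

end AddCommGrpCat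

open AddCommGrpCat in
/-- If `f : G ⟶ P` is a non-torsion homomorphism of abelian groups (for every `n > 0` the
map `g ↦ f (n • g)` is not the zero homomorphism), and `H` is a natural collection of
endomorphisms over `P` such that `f ∘ H_f = 0`, then `H_f = 0`. -/
theorem natCol_nonTorsion_trivial (P G : AddCommGrpCat.{0}) (f : G ⟶ P)
    (hf : ∀ n : ℤ, 0 < n → ∃ g : G, f (n • g) ≠ 0)
    (H : Over.forget P ⟶ Over.forget P)
    (hH : H.app (Over.mk f) ≫ f = 0) :
    H.app (Over.mk f) = 0 := by
  have hn : natScalar H (0 : P) = 0 := f.hom.eq_zero_of_forall_map_zsmul_eq_zero hf fun g => by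
    rw [← app_apply_eq_smul H (Over.mk f) g]
    exact ConcreteCategory.congr_hom hH g
  ext g
  exact (app_apply_eq_smul H (Over.mk f) g).trans (by rw [hn]; exact zero_smul ℤ (g : G))
end

section
/- Let K be a field and let A be a nontrivial commutative K-algebra. If the K-algebra homomorphism A → A ⊗[K] A given by a ↦ a ⊗ 1 (the left inclusion into the tensor product) is surjective, then the structure map K → A is surjective; equivalently, the rank of A as a K-module is at most 1. -/
/-!
Split `A = K·1 ⊕ W` and let `π` be the projection onto `K·1` along `W`. The linear map
`a ⊗ b ↦ π(a) b` sends `a ⊗ 1` into `K·1` and `1 ⊗ x` to `x`; so if `1 ⊗ x` is of the form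
`a ⊗ 1`, then `x ∈ K·1`.
-/

open scoped TensorProduct

open Function Submodule

namespace Algebra.TensorProduct

variable {K A : Type*} [Field K] [Ring A] [Algebra K A]

theorem mem_one_of_one_tmul_eq_includeLeft {a x : A}
    (hax : includeLeft (S := K) a = (1 : A) ⊗ₜ[K] x) : x ∈ (1 : Submodule K A) := by
  obtain ⟨W, hW⟩ := (1 : Submodule K A).exists_isCompl
  let π := (1 : Submodule K A).projection W hW
  let F : A ⊗[K] A →ₗ[K] A := LinearMap.mul' K A ∘ₗ π.rTensor A
  have hπa : π a = x :=
    calc π a = F (a ⊗ₜ 1) := by simp [F]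
      _ = F (1 ⊗ₜ x) := congrArg F hax
      _ = x := by simp [F, π, projection_apply_of_mem_left hW (one_le.mp le_rfl)]
  exact hπa ▸ projection_apply_mem hW a

theorem surjective_algebraMap_of_surjective_includeLeft
    (h : Surjective (includeLeft : A →ₐ[K] A ⊗[K] A)) : Surjective (algebraMap K A) := fun x ↦
  mem_one.mp <| mem_one_of_one_tmul_eq_includeLeft (h (1 ⊗ₜ x)).choose_spec

end Algebra.TensorProduct

theorem rank_le_one_of_surjective_algebraMap {K A : Type*} [Field K] [Ring A] [Algebra K A]
    (h : Surjective (algebraMap K A)) : Module.rank K A ≤ 1 :=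
  rank_le_one_iff.mpr ⟨1, fun x ↦ (h x).imp fun c hc ↦ by rw [← hc, Algebra.algebraMap_eq_smul_one]⟩

theorem solid_algebra_over_field_general {K A : Type*} [Field K] [CommRing A] [Algebra K A]
    (h : Function.Surjective
      (Algebra.TensorProduct.includeLeft : A →ₐ[K] A ⊗[K] A)) :
    Function.Surjective (algebraMap K A) ∧ Module.rank K A ≤ 1 :=
  have hsurj := Algebra.TensorProduct.surjective_algebraMap_of_surjective_includeLeft h
  ⟨hsurj, rank_le_one_of_surjective_algebraMap hsurj⟩

/-- If `A` is a nontrivial commutative algebra over a field `K` and the left inclusion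
`A → A ⊗[K] A`, `a ↦ a ⊗ 1`, is surjective, then the structure map `K → A` is surjective;
equivalently, the rank of `A` as a `K`-module is at most `1`. -/
theorem solid_algebra_over_field {K A : Type*} [Field K] [CommRing A] [Algebra K A]
    [Nontrivial A]
    (h : Function.Surjective
      (Algebra.TensorProduct.includeLeft : A →ₐ[K] A ⊗[K] A)) :
    Function.Surjective (algebraMap K A) ∧ Module.rank K A ≤ 1 :=
  solid_algebra_over_field_general h
end

section
/- Let C be a cocomplete category and let f : c ⟶ d be a morphism of C. Let (X, x₀) and (Y, y₀) be pointed types. If f satisfies X-base change and f satisfies Y-base change, then f satisfies (X × Y)-base change, where X × Y is pointed at (x₀, y₀). -/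
open CategoryTheory CategoryTheory.Limits

/-- A morphism `f : c ⟶ d` in a cocomplete category satisfies `X`-base change, for a
pointed type `(X, x₀)`, if the square with sides `f`, the basepoint coproduct inclusions
`c ⟶ X • c` and `d ⟶ X • d`, and the induced map `X • c ⟶ X • d`, is a pushout. -/
def SatisfiesBaseChange {C : Type u} [Category.{v} C] [HasColimitsOfSize.{w, w} C]
    {c d : C} (f : c ⟶ d) (X : Type w) (x₀ : X) : Prop :=
  IsPushout f (Sigma.ι (fun _ : X => c) x₀) (Sigma.ι (fun _ : X => d) x₀)
    (Limits.Sigma.map (fun _ : X => f))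

/-! Stack the `X`-base change square on top of the `X`-indexed coproduct of copies of the
`Y`-base change square, then reindex `∐ₓ ∐ᵧ` as `∐_{X × Y}`. A coproduct of pushout squares is a
pushout square because `colim` preserves colimits, and pushout squares paste. -/

theorem IsPushout.sigma_map {C : Type*} [Category C] {ι : Type*} [HasCoproductsOfShape ι C]
    {A B P Q : ι → C} {f : ∀ j, A j ⟶ B j} {g : ∀ j, A j ⟶ P j} {h : ∀ j, B j ⟶ Q j}
    {i : ∀ j, P j ⟶ Q j} (H : ∀ j, IsPushout (f j) (g j) (h j) (i j)) :
    IsPushout (Limits.Sigma.map f) (Limits.Sigma.map g) (Limits.Sigma.map h)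
      (Limits.Sigma.map i) :=
  (IsPushout.of_forall_isPushout_app (F₁ := Discrete.functor A) (F₂ := Discrete.functor B)
    (F₃ := Discrete.functor P) (F₄ := Discrete.functor Q)
    (f₁ := Discrete.natTrans fun j => f j.as) (f₂ := Discrete.natTrans fun j => g j.as)
    (f₃ := Discrete.natTrans fun j => h j.as) (f₄ := Discrete.natTrans fun j => i j.as)
    fun j => H j.as).map colim

section SigmaProd

variable {C : Type*} [Category C] {X Y : Type*}
  [HasCoproductsOfShape X C] [HasCoproductsOfShape Y C] [HasCoproductsOfShape (X × Y) C]

@[simps]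
noncomputable def sigmaSigmaProdIso (A : X → Y → C) :
    (∐ fun x => ∐ A x) ≅ ∐ fun p : X × Y => A p.1 p.2 where
  hom := Sigma.desc fun x => Sigma.desc fun y => Sigma.ι (fun p : X × Y => A p.1 p.2) (x, y)
  inv := Sigma.desc fun p => Sigma.ι (A p.1) p.2 ≫ Sigma.ι (fun x => ∐ A x) p.1

theorem sigma_map_sigma_map_comp_sigmaSigmaProdIso_hom {A B : X → Y → C}
    (φ : ∀ x y, A x y ⟶ B x y) :
    Limits.Sigma.map (fun x => Limits.Sigma.map (φ x)) ≫ (sigmaSigmaProdIso B).hom =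
      (sigmaSigmaProdIso A).hom ≫ Limits.Sigma.map fun p : X × Y => φ p.1 p.2 := by
  ext x y
  simp

end SigmaProd

/-- If `f` satisfies `X`-base change and `Y`-base change, then it satisfies
`(X × Y)`-base change. -/
theorem satisfiesBaseChange_prod {C : Type u} [Category.{v} C]
    [HasColimitsOfSize.{w, w} C] {c d : C} (f : c ⟶ d)
    (X Y : Type w) (x₀ : X) (y₀ : Y)
    (hX : SatisfiesBaseChange f X x₀) (hY : SatisfiesBaseChange f Y y₀) :
    SatisfiesBaseChange f (X × Y) (x₀, y₀) := by
  have reindex : IsPushout (Limits.Sigma.map fun _ : X => Limits.Sigma.map fun _ : Y => f)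
      (sigmaSigmaProdIso fun _ _ => c).hom (sigmaSigmaProdIso fun _ _ => d).hom
      (Limits.Sigma.map fun _ : X × Y => f) :=
    .of_vert_isIso ⟨sigma_map_sigma_map_comp_sigmaSigmaProdIso_hom fun _ _ => f⟩
  simpa [SatisfiesBaseChange] using
    (hX.paste_vert (IsPushout.sigma_map fun _ : X => hY)).paste_vert reindex
end

section
/- Let C be a cocomplete category and let f : c ⟶ d be a morphism of C. Let I be a small category, let F : I ⥤ Pointed be a diagram of pointed types, and let (Z, z₀) be a pointed type equipped with a colimit cocone exhibiting it as the colimit of F in the category Pointed of pointed types. If f satisfies F(i)-base change for every object i of I, then f satisfies (Z, z₀)-base change. -/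
open CategoryTheory CategoryTheory.Limits

/-! Maps out of `X • d` are `X`-indexed families of maps out of `d`, so `X`-base change for `f`
says: for every `v : d ⟶ e`, composition with `f` is a bijection from pointed maps
`(X, x₀) → (d ⟶ e, v)` to pointed maps `(X, x₀) → (c ⟶ e, f ≫ v)`. Pointed maps out of a colimit
of pointed types are compatible families of pointed maps out of the terms of the diagram, so this
unique lifting property passes to colimits. -/

theorem CategoryTheory.IsPushout.iff_existsUnique {C : Type*} [Category C] {Z X Y P : C}
    {f : Z ⟶ X} {g : Z ⟶ Y} {inl : X ⟶ P} {inr : Y ⟶ P} (sq : CommSq f g inl inr) :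
    IsPushout f g inl inr ↔ ∀ (W : C) (h : X ⟶ W) (k : Y ⟶ W), f ≫ h = g ≫ k →
      ∃! m : P ⟶ W, inl ≫ m = h ∧ inr ≫ m = k := by
  refine ⟨fun hP W h k hw => ⟨hP.desc h k hw, ⟨hP.inl_desc h k hw, hP.inr_desc h k hw⟩, ?_⟩,
    fun H => ?_⟩
  · rintro m ⟨hm₁, hm₂⟩
    exact hP.hom_ext (by rw [hm₁, hP.inl_desc]) (by rw [hm₂, hP.inr_desc])
  · choose desc hdesc huniq using fun s : PushoutCocone f g => H s.pt s.inl s.inr s.condition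
    exact IsPushout.of_isColimit' sq (PushoutCocone.IsColimit.mk sq.w desc
      (fun s => (hdesc s).1) (fun s => (hdesc s).2) fun s m h₁ h₂ => huniq s m ⟨h₁, h₂⟩)

@[simps]
noncomputable def CategoryTheory.Limits.Sigma.homEquiv {C : Type*} [Category C] {β : Type*}
    {F : β → C} [HasCoproduct F] {W : C} : (∐ F ⟶ W) ≃ ∀ b, F b ⟶ W where
  toFun m b := Sigma.ι F b ≫ m
  invFun := Sigma.desc
  left_inv m := by ext; simp
  right_inv w := by ext; simp

namespace Pointed

def HasUniqueLifts (X : Pointed.{w}) {A B : Type*} (φ : A → B) (a₀ : A) : Prop :=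
  ∀ u : X → B, u X.point = φ a₀ → ∃! w : X → A, w X.point = a₀ ∧ ∀ x, φ (w x) = u x

theorem funext_of_isColimit {I : Type*} [Category I] {F : I ⥤ Pointed.{w}} {co : Cocone F}
    (hco : IsColimit co) {A : Type*} {g g' : co.pt → A}
    (h₀ : g co.pt.point = g' co.pt.point)
    (h : ∀ i x, g ((co.ι.app i).toFun x) = g' ((co.ι.app i).toFun x)) : g = g' := by
  -- `A` may be large: test agreement of `g` and `g'` in a small pointed type of truth values
  let truth : Pointed.{w} := of (ULift.up.{w} True)
  let agree : co.pt ⟶ truth := ⟨fun z => ULift.up (g z = g' z), congrArg ULift.up (eq_true h₀)⟩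
  have : agree = ⟨fun _ => ULift.up True, rfl⟩ :=
    hco.hom_ext fun i => Hom.ext (funext fun x => by simp [agree, h i x])
  funext z
  exact of_eq_true (ULift.up.inj (congrFun (congrArg Hom.toFun this) z))

theorem exists_desc_of_isColimit {I : Type w} [Category I] {F : I ⥤ Pointed.{w}} {co : Cocone F}
    (hco : IsColimit co) {A : Type*} (a₀ : A) (a : ∀ i, F.obj i → A)
    (ha₀ : ∀ i, a i (F.obj i).point = a₀)
    (ha : ∀ ⦃i j⦄ (m : i ⟶ j) x, a j ((F.map m).toFun x) = a i x) :
    ∃ g : co.pt → A, g co.pt.point = a₀ ∧ ∀ i x, g ((co.ι.app i).toFun x) = a i x := by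
  -- `A` may be large: the cocone is built on a small quotient identifying indices of equal values
  let val : Option (Σ i, F.obj i) → A := fun t => t.elim a₀ fun p => a p.1 p.2
  let image : Pointed.{w} := of (Quot.mk (fun s t => val s = val t) none)
  let coc : Cocone F :=
    { pt := image
      ι :=
        { app i := ⟨fun x => Quot.mk _ (some ⟨i, x⟩), Quot.sound (ha₀ i)⟩
          naturality i j m := Hom.ext (funext fun x => Quot.sound (ha m x)) } }
  refine ⟨fun z => Quot.lift val (fun _ _ => id) ((hco.desc coc).toFun z), ?_, fun i x => ?_⟩
  · exact congrArg (Quot.lift val _) (hco.desc coc).map_point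
  · exact congrArg (Quot.lift val _) (congrFun (congrArg Hom.toFun (hco.fac coc i)) x)

theorem hasUniqueLifts_of_isColimit {I : Type w} [Category I] {F : I ⥤ Pointed.{w}}
    {co : Cocone F} (hco : IsColimit co) {A B : Type*} {φ : A → B} {a₀ : A}
    (h : ∀ i, (F.obj i).HasUniqueLifts φ a₀) : co.pt.HasUniqueLifts φ a₀ := by
  intro u hu
  have hlift i :=
    h i (fun x => u ((co.ι.app i).toFun x)) ((congrArg u (co.ι.app i).map_point).trans hu)
  choose w hw using fun i => (hlift i).exists
  have hw_nat ⦃i j : I⦄ (m : i ⟶ j) x : w j ((F.map m).toFun x) = w i x := by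
    refine congrFun ((hlift i).unique (y₁ := fun x => w j ((F.map m).toFun x)) ⟨?_, fun x => ?_⟩
      (hw i)) x
    · rw [(F.map m).map_point, (hw j).1]
    · rw [(hw j).2]
      exact congrArg u (congrFun (congrArg Hom.toFun (co.w m)) x)
  obtain ⟨g, hg₀, hg⟩ := exists_desc_of_isColimit hco a₀ w (fun i => (hw i).1) hw_nat
  have hφg : φ ∘ g = u :=
    funext_of_isColimit hco (by rw [Function.comp_apply, hg₀, hu])
      fun i x => by rw [Function.comp_apply, hg, (hw i).2]
  refine ⟨g, ⟨hg₀, congrFun hφg⟩, ?_⟩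
  rintro g' ⟨hg'₀, hg'⟩
  refine funext_of_isColimit hco (hg'₀.trans hg₀.symm) fun i x => ?_
  rw [hg]
  refine congrFun ((hlift i).unique ⟨?_, fun x => hg' _⟩ (hw i)) x
  exact (congrArg g' (co.ι.app i).map_point).trans hg'₀

end Pointed

theorem satisfiesBaseChange_iff_hasUniqueLifts {C : Type u} [Category.{v} C]
    [HasColimitsOfSize.{w, w} C] {c d : C} (f : c ⟶ d) (X : Pointed.{w}) :
    SatisfiesBaseChange f X X.point ↔ ∀ (e : C) (v : d ⟶ e), X.HasUniqueLifts (f ≫ ·) v := by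
  rw [SatisfiesBaseChange, IsPushout.iff_existsUnique ⟨by simp⟩]
  refine forall₂_congr fun e v => Sigma.homEquiv.forall_congr fun k => ?_
  refine imp_congr (by simp [eq_comm]) (Sigma.homEquiv.existsUnique_congr fun m => ?_)
  simp [Sigma.hom_ext_iff]

/-- If `f` satisfies `F(i)`-base change for every object `i` of a small diagram
`F : I ⥤ Pointed` of pointed types, then `f` satisfies base change with respect to any
colimit of `F` in the category of pointed types. -/
theorem satisfiesBaseChange_colimit {C : Type u} [Category.{v} C]
    [HasColimitsOfSize.{w, w} C] {c d : C} (f : c ⟶ d)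
    {I : Type w} [SmallCategory I] (F : I ⥤ Pointed.{w})
    (co : Cocone F) (hco : IsColimit co)
    (h : ∀ i : I, SatisfiesBaseChange f (F.obj i).X (F.obj i).point) :
    SatisfiesBaseChange f co.pt.X co.pt.point :=
  (satisfiesBaseChange_iff_hasUniqueLifts f co.pt).2 fun e v =>
    Pointed.hasUniqueLifts_of_isColimit hco fun i =>
      (satisfiesBaseChange_iff_hasUniqueLifts f (F.obj i)).1 (h i) e v
end

section
/- Let C be a cocomplete category and let f : c ⟶ d be a morphism of C. Let S⁰ denote the pointed type with two elements (Bool, pointed at false). If f satisfies S⁰-base change (equivalently, if the induced morphism c ⊔ d ⟶ d ⊔ d, given by f on the first summand and the identity on the second summand, is an isomorphism), then f satisfies X-base change for every pointed type (X, x₀). -/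
open CategoryTheory CategoryTheory.Limits

/-!
By the universal property of the `S⁰` square, maps `Bool • d ⟶ T` with basepoint component `g`
correspond to maps `Bool • c ⟶ T` with basepoint component `f ≫ g`. Reading off the other
component shows that every `u : c ⟶ T` extends along `f` once some `g : d ⟶ T` exists, and
comparing the maps induced by `(m, m)` and `(m, m')` shows that `f` is an epimorphism. For an
arbitrary pointed `X`, a cocone `(s₁, s₂)` on the square is then induced by the extensions along
`f` of the components `ι_x ≫ s₂`, which are unique by epimorphy.
-/

section

variable {C : Type u} [Category.{v} C] [HasColimitsOfSize.{0, 0} C] {c d : C} {f : c ⟶ d}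

lemma epi_of_satisfiesBaseChange_bool (h : SatisfiesBaseChange f Bool false) : Epi f := by
  refine ⟨fun {T} m m' hm => ?_⟩
  have : Sigma.desc (fun b : Bool => if b then m else m) =
      Sigma.desc (fun b : Bool => if b then m' else m) := by
    refine h.hom_ext (by simp) (Sigma.hom_ext _ _ fun b => ?_)
    cases b <;> simp [hm]
  simpa using congrArg (Sigma.ι (fun _ : Bool => d) true ≫ ·) this

lemma exists_comp_eq_of_satisfiesBaseChange_bool (h : SatisfiesBaseChange f Bool false)
    {T : C} (g : d ⟶ T) (u : c ⟶ T) : ∃ m : d ⟶ T, f ≫ m = u := by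
  have w : f ≫ g = Sigma.ι (fun _ : Bool => c) false ≫
      Sigma.desc (fun b : Bool => if b then u else f ≫ g) := by simp
  refine ⟨Sigma.ι (fun _ : Bool => d) true ≫ h.desc g _ w, ?_⟩
  rw [← Sigma.ι_map_assoc (fun _ : Bool => f), h.inr_desc]
  simp

end

lemma satisfiesBaseChange_of_epi_of_exists_comp_eq {C : Type u} [Category.{v} C]
    [HasColimitsOfSize.{w, w} C] {c d : C} (f : c ⟶ d) [Epi f]
    (hf : ∀ {T : C}, (d ⟶ T) → ∀ u : c ⟶ T, ∃ m : d ⟶ T, f ≫ m = u)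
    (X : Type w) (x₀ : X) :
    SatisfiesBaseChange f X x₀ := by
  refine IsPushout.of_isColimit' ⟨(Sigma.ι_map (fun _ : X => f) x₀).symm⟩ <|
    PushoutCocone.IsColimit.mk _
      (fun s => Sigma.desc fun x => (hf s.inl (Sigma.ι (fun _ : X => c) x ≫ s.inr)).choose)
      (fun s => ?_) (fun s => Sigma.hom_ext _ _ fun x => ?_)
      (fun s m _ hm => Sigma.hom_ext _ _ fun x => ?_)
  · rw [Sigma.ι_desc, ← cancel_epi f, (hf s.inl _).choose_spec, s.condition]
  · rw [Sigma.ι_map_assoc, Sigma.ι_desc, (hf s.inl _).choose_spec]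
  · rw [Sigma.ι_desc, ← cancel_epi f, (hf s.inl _).choose_spec, ← hm, Sigma.ι_map_assoc]

/-- If `f` satisfies `S⁰`-base change, where `S⁰` is the two-element type `Bool` pointed
at `false`, then `f` satisfies `X`-base change for every pointed type `(X, x₀)`. -/
theorem satisfiesBaseChange_of_sphereZero {C : Type u} [Category.{v} C]
    [HasColimitsOfSize.{0, 0} C] [HasColimitsOfSize.{w, w} C] {c d : C} (f : c ⟶ d)
    (h : SatisfiesBaseChange f Bool false) (X : Type w) (x₀ : X) :
    SatisfiesBaseChange f X x₀ :=
  have := epi_of_satisfiesBaseChange_bool h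
  satisfiesBaseChange_of_epi_of_exists_comp_eq f
    (exists_comp_eq_of_satisfiesBaseChange_bool h) X x₀
end

section
/- Let I be a small category and let F : I ⥤ Pointed be a diagram of pointed types. Let U : Pointed ⥤ Type be the forgetful functor. Let T be the colimit in Type of U ∘ F, let S be the colimit in Type of the constant functor on I with value PUnit, let s : S → T be the map induced by the natural transformation const PUnit ⟶ U ∘ F whose components pick out the basepoints, and let t : S → PUnit be the unique map. Let Q be the pushout in Type of t : S → PUnit and s : S → T. Then Q, pointed at the image of the point of PUnit and equipped with the cocone induced by the canonical maps U(F i) → T → Q, is a colimit of F in the category Pointed of pointed types. -/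
open CategoryTheory CategoryTheory.Limits

universe u

variable {I : Type u} [SmallCategory I] (F : I ⥤ Pointed.{u})

/-- The colimit in `Type` of the underlying types of a diagram of pointed types. -/
noncomputable def underlyingColimit : Type u := colimit (F ⋙ forget Pointed)

/-- The colimit in `Type` of the constant diagram with value `PUnit`. -/
noncomputable def basepointsColimit : Type u :=
  colimit ((Functor.const I).obj (PUnit : Type u))

/-- The natural transformation from the constant diagram `PUnit` to the underlying diagram
whose components pick out the basepoints. -/
def basepointTrans : (Functor.const I).obj (PUnit : Type u) ⟶ F ⋙ forget Pointed where
  app i := TypeCat.ofHom fun _ => (F.obj i).point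
  naturality i j f := by
    ext u
    exact ((F.map f).map_point).symm

/-- The induced map on colimits from the colimit of basepoints to the colimit of
underlying types. -/
noncomputable def basepointsMap : basepointsColimit (I := I) ⟶ underlyingColimit F :=
  colimMap (basepointTrans F)

/-- The unique map from the colimit of basepoints to `PUnit`. -/
def collapseMap : basepointsColimit (I := I) ⟶ (PUnit : Type u) := TypeCat.ofHom fun _ => PUnit.unit

/-- The pushout in `Type` of the collapse map along the basepoints map. -/
noncomputable def pointedColimitCarrier : Type u :=
  pushout (collapseMap (I := I)) (basepointsMap F)

/-- The basepoint of the pushout: the image of the point of `PUnit`. -/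
noncomputable def pointedColimitPoint : pointedColimitCarrier F :=
  pushout.inl (collapseMap (I := I)) (basepointsMap F) PUnit.unit

/-- The cocone on `F` with apex the pushout, with structure maps the canonical maps
`U (F i) ⟶ T ⟶ Q`. -/
noncomputable def pointedColimitCocone : Cocone F where
  pt := ⟨pointedColimitCarrier F, pointedColimitPoint F⟩
  ι :=
    { app := fun i =>
        { toFun := fun x =>
            pushout.inr (collapseMap (I := I)) (basepointsMap F)
              (colimit.ι (F ⋙ forget Pointed) i x)
          map_point := by
            have h1 := types_congr_hom (ι_colimMap (basepointTrans F) i) PUnit.unit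
            have h2 := types_congr_hom
              (pushout.condition (f := collapseMap (I := I)) (g := basepointsMap F))
              (colimit.ι ((Functor.const I).obj (PUnit : Type u)) i PUnit.unit)
            dsimp [basepointsMap, basepointTrans] at h1 ⊢
            rw [← h1]
            exact h2.symm }
      naturality := by
        intro i j f
        apply Pointed.Hom.ext
        funext x
        have hw := types_congr_hom (colimit.w (F ⋙ forget Pointed) f) x
        simp only [Pointed.Hom.comp_toFun', Function.comp_apply]
        exact congrArg (fun y => pushout.inr (collapseMap (I := I)) (basepointsMap F) y) hw }

/-! A cocone `c` on `F` in `Pointed` is in particular a cocone on the underlying types, so it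
induces a map `T → c`. That map sends the image of each basepoint to the point of `c`, which is
exactly the compatibility needed to glue it with the constant map `PUnit → c` along the pushout.
Uniqueness holds because `Q` is covered by its point and the images of the `F i`, so a pointed
map out of `Q` is determined by its composites with the cocone maps. -/

section

variable {F}

@[simp]
lemma basepointsMap_ι_apply (i : I) (u : PUnit.{u + 1}) :
    basepointsMap F (colimit.ι ((Functor.const I).obj (PUnit : Type u)) i u) =
      colimit.ι (F ⋙ forget Pointed) i (F.obj i).point :=
  types_congr_hom (ι_colimMap (basepointTrans F) i) u

noncomputable def underlyingDesc (c : Cocone F) : underlyingColimit F ⟶ c.pt.X :=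
  colimit.desc (F ⋙ forget Pointed) ((forget Pointed).mapCocone c)

@[simp]
lemma underlyingDesc_ι_apply (c : Cocone F) (i : I) (x : F.obj i) :
    underlyingDesc c (colimit.ι (F ⋙ forget Pointed) i x) = (c.ι.app i).toFun x :=
  types_congr_hom (colimit.ι_desc ((forget Pointed).mapCocone c) i) x

lemma collapseMap_comp_point_eq (c : Cocone F) :
    collapseMap ≫ TypeCat.ofHom (fun _ => c.pt.point) = basepointsMap F ≫ underlyingDesc c := by
  refine colimit.hom_ext fun i => ?_
  ext u
  change c.pt.point =
    underlyingDesc c (basepointsMap F (colimit.ι ((Functor.const I).obj (PUnit : Type u)) i u))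
  rw [basepointsMap_ι_apply, underlyingDesc_ι_apply]
  exact (c.ι.app i).map_point.symm

noncomputable def pointedColimitDesc (c : Cocone F) : (pointedColimitCocone F).pt ⟶ c.pt where
  toFun := pushout.desc _ _ (collapseMap_comp_point_eq c)
  map_point := types_congr_hom (pushout.inl_desc _ _ (collapseMap_comp_point_eq c)) PUnit.unit

lemma ι_pointedColimitDesc (c : Cocone F) (i : I) :
    (pointedColimitCocone F).ι.app i ≫ pointedColimitDesc c = c.ι.app i := by
  ext x
  exact (types_congr_hom (pushout.inr_desc _ _ (collapseMap_comp_point_eq c)) _).trans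
    (underlyingDesc_ι_apply c i x)

lemma pointedColimitCocone_hom_ext {Y : Pointed.{u}} {f g : (pointedColimitCocone F).pt ⟶ Y}
    (h : ∀ i, (pointedColimitCocone F).ι.app i ≫ f = (pointedColimitCocone F).ι.app i ≫ g) :
    f = g := by
  suffices TypeCat.ofHom f.toFun = (TypeCat.ofHom g.toFun : pointedColimitCarrier F ⟶ Y.X) from
    Pointed.Hom.ext (funext (types_congr_hom this))
  apply pushout.hom_ext
  · ext ⟨⟩
    exact f.map_point.trans g.map_point.symm
  · refine colimit.hom_ext fun i => ?_
    ext x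
    exact congrFun (congrArg Pointed.Hom.toFun (h i)) x

end

/-- Colimits of diagrams of pointed types are computed as the pushout of the colimit of
underlying types along the collapse of the colimit of basepoints: the cocone above is a
colimit cocone. -/
theorem pointedColimitCocone_isColimit : Nonempty (IsColimit (pointedColimitCocone F)) :=
  ⟨{ desc := pointedColimitDesc
     fac := ι_pointedColimitDesc
     uniq := fun c _ hm =>
      pointedColimitCocone_hom_ext fun i => (hm i).trans (ι_pointedColimitDesc c i).symm }⟩
end
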